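/- arXiv:0904.0242 — 2 statements merged into one kernel-verified Lean document; each statement's English description precedes it below -/
import Mathlib

section
/- Let m > n ≥ 0. Then every generating m-tuple of the free abelian group ℤⁿ is reducible, i.e. Nielsen equivalent to an m-tuple whose last entry is the identity. -/
/-!
Since `m > n = rank ℤⁿ`, the entries satisfy a nontrivial integer relation `∑ cₖ • gₖ = 0`.
The move `gᵢ ↦ gᵢ + gⱼ` turns it into the relation with `cⱼ` replaced by `cⱼ - cᵢ`, and
inverting `gᵢ` flips the sign of `cᵢ`. Running the Euclidean algorithm on the coefficients
this way strictly decreases `∑ |cₖ|` until a single coefficient `cᵢ ≠ 0` is left; then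
`cᵢ • gᵢ = 0`, so `gᵢ = 0` by torsion-freeness, and a swap moves it to the last place.
-/

/-- An elementary Nielsen transformation on `m`-tuples of elements of an additive
group `G`: swapping two entries, negating an entry, or replacing the `i`-th entry
`gᵢ` by `gᵢ + gⱼ` for some `j ≠ i`. -/
inductive AddNielsenStep {G : Type*} [AddGroup G] {m : ℕ} : (Fin m → G) → (Fin m → G) → Prop
  | swap (g : Fin m → G) (i j : Fin m) : AddNielsenStep g (g ∘ Equiv.swap i j)
  | neg (g : Fin m → G) (i : Fin m) : AddNielsenStep g (Function.update g i (-(g i)))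
  | add (g : Fin m → G) (i j : Fin m) (hij : i ≠ j) :
      AddNielsenStep g (Function.update g i (g i + g j))

/-- Two `m`-tuples are Nielsen equivalent if one is obtained from the other by a
finite sequence of elementary Nielsen transformations. -/
def AddNielsenEquiv {G : Type*} [AddGroup G] {m : ℕ} (g h : Fin m → G) : Prop :=
  Relation.EqvGen AddNielsenStep g h

open Function

section UpdateCoefficients

variable {ι G : Type*} [Fintype ι] [DecidableEq ι] [AddCommGroup G]

theorem sum_zsmul_update_neg (c : ι → ℤ) (g : ι → G) (i : ι) :
    ∑ k, update c i (-c i) k • update g i (-g i) k = ∑ k, c k • g k := by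
  refine Finset.sum_congr rfl fun k _ => ?_
  rcases eq_or_ne k i with rfl | hki
  · simp
  · simp [hki]

theorem sum_zsmul_update_add (c : ι → ℤ) (g : ι → G) {i j : ι} (hij : i ≠ j) :
    ∑ k, update c j (c j - c i) k • update g i (g i + g j) k = ∑ k, c k • g k := by
  have key : ∀ k, update c j (c j - c i) k • update g i (g i + g j) k
      = c k • g k + (Pi.single i (c i • g j) : ι → G) k
        - (Pi.single j (c i • g j) : ι → G) k := by
    intro k
    rcases eq_or_ne k i with rfl | hki
    · simp [hij, smul_add]
    rcases eq_or_ne k j with rfl | hkj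
    · simp [hki, sub_smul]
    · simp [hki, hkj]
  simp [key, Finset.sum_add_distrib, Finset.sum_sub_distrib]

end UpdateCoefficients

namespace AddNielsenEquiv

section AddGroup

variable {G : Type*} [AddGroup G] {m : ℕ}

theorem refl (g : Fin m → G) : AddNielsenEquiv g g := Relation.EqvGen.refl g

theorem trans {g h k : Fin m → G} (hgh : AddNielsenEquiv g h) (hhk : AddNielsenEquiv h k) :
    AddNielsenEquiv g k :=
  Relation.EqvGen.trans _ _ _ hgh hhk

theorem comp_swap (g : Fin m → G) (i j : Fin m) : AddNielsenEquiv g (g ∘ Equiv.swap i j) :=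
  .rel _ _ (.swap g i j)

theorem update_neg (g : Fin m → G) (i : Fin m) : AddNielsenEquiv g (update g i (-g i)) :=
  .rel _ _ (.neg g i)

theorem update_add (g : Fin m → G) {i j : Fin m} (hij : i ≠ j) :
    AddNielsenEquiv g (update g i (g i + g j)) :=
  .rel _ _ (.add g i j hij)

end AddGroup

section AddCommGroup

variable {G : Type*} [AddCommGroup G] {m : ℕ}

theorem exists_sum_natAbs_lt_of_mul_pos (g : Fin m → G) (c : Fin m → ℤ) {i j : Fin m}
    (hij : i ≠ j) (hpos : 0 < c i * c j) (hle : (c i).natAbs ≤ (c j).natAbs) :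
    ∃ (g' : Fin m → G) (c' : Fin m → ℤ), AddNielsenEquiv g g' ∧
      ∑ k, c' k • g' k = ∑ k, c k • g k ∧ c' i = c i ∧
      ∑ k, (c' k).natAbs < ∑ k, (c k).natAbs := by
  refine ⟨_, _, update_add g hij, sum_zsmul_update_add c g hij, update_of_ne hij _ _, ?_⟩
  have hlt : (c j - c i).natAbs < (c j).natAbs := by
    rcases mul_pos_iff.mp hpos with ⟨_, _⟩ | ⟨_, _⟩ <;> omega
  refine Finset.sum_lt_sum (fun k _ => ?_) ⟨j, Finset.mem_univ j, by simpa using hlt⟩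
  rcases eq_or_ne k j with rfl | hkj
  · simpa using hlt.le
  · simp [hkj]

theorem exists_sum_natAbs_lt (g : Fin m → G) (c : Fin m → ℤ) {i j : Fin m}
    (hij : i ≠ j) (hi : c i ≠ 0) (hj : c j ≠ 0) :
    ∃ (g' : Fin m → G) (c' : Fin m → ℤ), AddNielsenEquiv g g' ∧
      ∑ k, c' k • g' k = ∑ k, c k • g k ∧ c' ≠ 0 ∧
      ∑ k, (c' k).natAbs < ∑ k, (c k).natAbs := by
  wlog hle : (c i).natAbs ≤ (c j).natAbs generalizing i j
  · exact this hij.symm hj hi (le_of_not_ge hle)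
  rcases (mul_ne_zero hi hj).lt_or_gt with hneg | hpos
  · -- negating the `i`-th entry makes the two coefficients have the same sign
    set c₁ := update c i (-c i)
    have hc₁i : c₁ i = -c i := update_self ..
    have hc₁j : c₁ j = c j := update_of_ne hij.symm ..
    obtain ⟨g', c', hg', hsum, hc'i, hlt⟩ := exists_sum_natAbs_lt_of_mul_pos
      (update g i (-g i)) c₁ hij (by rw [hc₁i, hc₁j, neg_mul]; exact neg_pos.mpr hneg)
      (by rwa [hc₁i, hc₁j, Int.natAbs_neg])
    refine ⟨g', c', (update_neg g i).trans hg', hsum.trans (sum_zsmul_update_neg c g i),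
      ne_iff.mpr ⟨i, by simpa [hc'i, hc₁i] using hi⟩, hlt.trans_le (le_of_eq ?_)⟩
    refine Finset.sum_congr rfl fun k _ => ?_
    rcases eq_or_ne k i with rfl | hki
    · simp [c₁]
    · simp [c₁, hki]
  · obtain ⟨g', c', hg', hsum, hc'i, hlt⟩ := exists_sum_natAbs_lt_of_mul_pos g c hij hpos hle
    exact ⟨g', c', hg', hsum, ne_iff.mpr ⟨i, hc'i ▸ hi⟩, hlt⟩

theorem exists_apply_eq_zero_of_sum_zsmul_eq_zero [IsAddTorsionFree G] {g : Fin m → G}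
    {c : Fin m → ℤ} (hc : c ≠ 0) (hrel : ∑ k, c k • g k = 0) :
    ∃ h i, AddNielsenEquiv g h ∧ h i = 0 := by
  induction hN : ∑ k, (c k).natAbs using Nat.strong_induction_on generalizing g c with
  | _ N ih =>
  obtain ⟨i, hi⟩ := ne_iff.mp hc
  by_cases hsingle : ∀ j, j ≠ i → c j = 0
  · refine ⟨g, i, refl g, ?_⟩
    rw [Fintype.sum_eq_single i fun j hj => by simp [hsingle j hj]] at hrel
    exact (IsAddTorsionFree.zsmul_eq_zero_iff_right hi).mp hrel
  push Not at hsingle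
  obtain ⟨j, hji, hj⟩ := hsingle
  obtain ⟨g', c', hg', hsum, hc', hlt⟩ := exists_sum_natAbs_lt g c hji.symm hi hj
  obtain ⟨h, k, hh, hk⟩ := ih _ (hN ▸ hlt) hc' (hsum.trans hrel) rfl
  exact ⟨h, k, hg'.trans hh, hk⟩

theorem exists_apply_eq_zero_at_of_sum_zsmul_eq_zero [IsAddTorsionFree G] {g : Fin m → G}
    {c : Fin m → ℤ} (hc : c ≠ 0) (hrel : ∑ k, c k • g k = 0) (i : Fin m) :
    ∃ h, AddNielsenEquiv g h ∧ h i = 0 := by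
  obtain ⟨h, k, hgh, hk⟩ := exists_apply_eq_zero_of_sum_zsmul_eq_zero hc hrel
  exact ⟨h ∘ Equiv.swap k i, hgh.trans (comp_swap h k i), by simpa using hk⟩

end AddCommGroup

end AddNielsenEquiv

/-- If `m > n ≥ 0`, then every generating `m`-tuple of the free abelian group `ℤⁿ`
is reducible, i.e. Nielsen equivalent to an `m`-tuple whose last entry is the
identity. -/
theorem zn_oversized_generating_tuple_reducible (n m : ℕ) (hm : n < m)
    (g : Fin m → (Fin n → ℤ)) :
    ∃ h : Fin m → (Fin n → ℤ),
      AddNielsenEquiv g h ∧ h ⟨m - 1, by omega⟩ = 0 := by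
  have hdep : ¬ LinearIndependent ℤ g := fun hli =>
    hm.not_ge (by simpa using hli.fintype_card_le_finrank)
  obtain ⟨c, hrel, i, hi⟩ := Fintype.not_linearIndependent_iff.mp hdep
  exact AddNielsenEquiv.exists_apply_eq_zero_at_of_sum_zsmul_eq_zero (ne_iff.mpr ⟨i, hi⟩) hrel _
end

section
/- Let p ≥ 2 and q be coprime integers, and let A = [[1,0],[1,1]] and B = [[1−pq, p²],[−q², 1+pq]] in SL(2,ℤ). Then the orbit of the set {0/1, p/q} under the Möbius action of the subgroup ⟨A,B⟩ on ℚ ∪ {∞} is a strictly smaller subset of ℚ ∪ {∞}: every slope a/b (in lowest terms) in this orbit satisfies p ∣ a, so in particular the slope 1/1 does not lie in the orbit. -/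
/-- The parabolic matrix `[[1,0],[1,1]]` in `SL(2,ℤ)`, representing the Dehn twist
of the torus along the simple closed curve of slope `0/1` (the primitive vector
`(0,1)`). -/
def dehnTwistA : Matrix.SpecialLinearGroup (Fin 2) ℤ :=
  ⟨!![1, 0; 1, 1], by norm_num [Matrix.det_fin_two_of]⟩

/-- The parabolic matrix `[[1 - pq, p²],[-q², 1 + pq]]` in `SL(2,ℤ)`, representing
the Dehn twist of the torus along the simple closed curve of slope `p/q` (the
primitive vector `(p,q)`). -/
def dehnTwistB (p q : ℤ) : Matrix.SpecialLinearGroup (Fin 2) ℤ :=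
  ⟨!![1 - p * q, p ^ 2; -q ^ 2, 1 + p * q], by rw [Matrix.det_fin_two_of]; ring⟩

/-!
Both twists have upper-right entry divisible by `p` (namely `0` and `p²`). The matrices of
`SL(2, R)` with this property form a subgroup `Γ⁰(p)`, so it contains the whole group generated
by the twists, and a matrix in `Γ⁰(p)` maps vectors whose first coordinate is divisible by `p`
to vectors with the same property. Both `(0, 1)` and `(p, q)` have it, while `(±1, ±1)` does
not since `p ≥ 2`.
-/

open Matrix MatrixGroups

namespace Matrix.SpecialLinearGroup

variable {R : Type*} [CommRing R]

def Gamma0Upper (p : R) : Subgroup SL(2, R) where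
  carrier := {g | p ∣ g 0 1}
  one_mem' := by simp
  mul_mem' {a b} ha hb := by
    change p ∣ _
    simp only [coe_mul, mul_apply, Fin.sum_univ_two]
    exact dvd_add (hb.mul_left _) (ha.mul_right _)
  inv_mem' {a} ha := by
    change p ∣ _
    simpa [SL2_inv_expl a] using ha

@[simp]
theorem mem_Gamma0Upper {p : R} {g : SL(2, R)} : g ∈ Gamma0Upper p ↔ p ∣ g 0 1 :=
  Iff.rfl

theorem dvd_mulVec_apply_zero {p : R} {g : SL(2, R)} (hg : g ∈ Gamma0Upper p)
    {v : Fin 2 → R} (hv : p ∣ v 0) : p ∣ ((g : Matrix (Fin 2) (Fin 2) R) *ᵥ v) 0 := by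
  rw [mem_Gamma0Upper] at hg
  simp only [mulVec, dotProduct, Fin.sum_univ_two]
  exact dvd_add (hv.mul_left _) (hg.mul_right _)

end Matrix.SpecialLinearGroup

open Matrix.SpecialLinearGroup

theorem closure_dehnTwists_le_Gamma0Upper (p q : ℤ) :
    Subgroup.closure {dehnTwistA, dehnTwistB p q} ≤ Gamma0Upper p := by
  rw [Subgroup.closure_le, Set.insert_subset_iff, Set.singleton_subset_iff, SetLike.mem_coe,
    SetLike.mem_coe]
  exact ⟨mem_Gamma0Upper.2 (by simp [dehnTwistA]),
    mem_Gamma0Upper.2 (by simp [dehnTwistB, sq])⟩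

theorem twist_orbit_strictly_smaller_general (p q : ℤ) (hp : 2 ≤ p) :
    (∀ g ∈ Subgroup.closure
        ({dehnTwistA, dehnTwistB p q} : Set (Matrix.SpecialLinearGroup (Fin 2) ℤ)),
      ∀ v ∈ ({![0, 1], ![p, q]} : Set (Fin 2 → ℤ)),
        p ∣ (g : Matrix (Fin 2) (Fin 2) ℤ).mulVec v 0) ∧
    (∀ g ∈ Subgroup.closure
        ({dehnTwistA, dehnTwistB p q} : Set (Matrix.SpecialLinearGroup (Fin 2) ℤ)),
      ∀ v ∈ ({![0, 1], ![p, q]} : Set (Fin 2 → ℤ)),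
        (g : Matrix (Fin 2) (Fin 2) ℤ).mulVec v ≠ ![1, 1] ∧
        (g : Matrix (Fin 2) (Fin 2) ℤ).mulVec v ≠ ![-1, -1]) := by
  have hdvd : ∀ g ∈ Subgroup.closure {dehnTwistA, dehnTwistB p q},
      ∀ v ∈ ({![0, 1], ![p, q]} : Set (Fin 2 → ℤ)), p ∣ ((g : Matrix (Fin 2) (Fin 2) ℤ) *ᵥ v) 0 := by
    rintro g hg v (rfl | rfl)
    all_goals
      exact dvd_mulVec_apply_zero (closure_dehnTwists_le_Gamma0Upper p q hg) (by simp)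
  have hp1 : ¬p ∣ 1 := fun h => by linarith [Int.le_of_dvd one_pos h]
  refine ⟨hdvd, fun g hg v hv => ⟨fun h => hp1 ?_, fun h => hp1 ?_⟩⟩
  · simpa [h] using hdvd g hg v hv
  · simpa [h] using hdvd g hg v hv

/-- A matrix in `SL(2,ℤ)` acts on slopes of primitive integer vectors, sending the
primitive vector `(u,v)` (slope `u/v`) to `(au + bv, cu + dv)`.  The orbit of the
slopes `{0/1, p/q}` under the subgroup generated by the Dehn twists `A` and `B` is
strictly smaller than `ℚ ∪ {∞}`: every slope `a/b` in the orbit satisfies `p ∣ a`;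
in particular the slope `1/1` does not lie in the orbit. -/
theorem twist_orbit_strictly_smaller (p q : ℤ) (hp : 2 ≤ p) (hpq : IsCoprime p q) :
    (∀ g ∈ Subgroup.closure
        ({dehnTwistA, dehnTwistB p q} : Set (Matrix.SpecialLinearGroup (Fin 2) ℤ)),
      ∀ v ∈ ({![0, 1], ![p, q]} : Set (Fin 2 → ℤ)),
        p ∣ (g : Matrix (Fin 2) (Fin 2) ℤ).mulVec v 0) ∧
    (∀ g ∈ Subgroup.closure
        ({dehnTwistA, dehnTwistB p q} : Set (Matrix.SpecialLinearGroup (Fin 2) ℤ)),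
      ∀ v ∈ ({![0, 1], ![p, q]} : Set (Fin 2 → ℤ)),
        (g : Matrix (Fin 2) (Fin 2) ℤ).mulVec v ≠ ![1, 1] ∧
        (g : Matrix (Fin 2) (Fin 2) ℤ).mulVec v ≠ ![-1, -1]) :=
  twist_orbit_strictly_smaller_general p q hp
end
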